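/- Let G be a group and α a normalized 3-cocycle on G. For all g, h, x ∈ G with gh = hg, the following six-cocycle product identity holds: α(g, hx⁻¹, x) · α(h, gx⁻¹, x)⁻¹ · α(gx⁻¹, x, hx⁻¹)⁻¹ · α(hx⁻¹, x, gx⁻¹) · α(x, gx⁻¹, xhx⁻¹) · α(x, hx⁻¹, xgx⁻¹)⁻¹ = β_g(x⁻¹, xhx⁻¹) · β_g(h, x⁻¹)⁻¹. -/

import Mathlib

/-- A normalized 3-cocycle on a group `G` with values in `ℂˣ`. -/
def IsNormalized3Cocycle {G : Type*} [Group G] (α : G → G → G → ℂˣ) : Prop :=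
  (∀ g₀ g₁ g₂ g₃ : G,
      α g₁ g₂ g₃ * (α (g₀ * g₁) g₂ g₃)⁻¹ * α g₀ (g₁ * g₂) g₃ *
        (α g₀ g₁ (g₂ * g₃))⁻¹ * α g₀ g₁ g₂ = 1) ∧
  (∀ g h : G, α 1 g h = 1 ∧ α g 1 h = 1 ∧ α g h 1 = 1)

/-- The twisted 2-cocycle `β_a(b,c)` built from a 3-cocycle `α`. -/
def betaTw {G : Type*} [Group G] (α : G → G → G → ℂˣ) (a b c : G) : ℂˣ :=
  α a b c * α b c (c⁻¹ * b⁻¹ * a * b * c) * (α b (b⁻¹ * a * b) c)⁻¹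

/-!
Write `F(g, h) = α(g, hx⁻¹, x) α(hx⁻¹, x, gx⁻¹) α(x, gx⁻¹, xhx⁻¹)` and, for commuting `g, h`,
`H(g, h) = α(g, x⁻¹, xhx⁻¹) α(x⁻¹, xhx⁻¹, xgx⁻¹) α(h, g, x⁻¹)`. The left-hand side is
`F(g, h) / F(h, g)` and the right-hand side is `H(g, h) / H(h, g)`, so it suffices that
`F(g, h) H(h, g)` is symmetric in `g, h`. Three instances of the cocycle condition, each with a
cancelling pair `x⁻¹ x` in adjacent slots, show that this product equals
`α(gh, x⁻¹, x) α(x⁻¹, x, ghx⁻¹)`, which depends on `g, h` only through `gh = hg`.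
-/

namespace IsNormalized3Cocycle

variable {G : Type*} [Group G] {α : G → G → G → ℂˣ}

theorem cocycle_eq (hα : IsNormalized3Cocycle α) (g₀ g₁ g₂ g₃ : G) :
    α g₁ g₂ g₃ * α g₀ (g₁ * g₂) g₃ * α g₀ g₁ g₂ =
      α (g₀ * g₁) g₂ g₃ * α g₀ g₁ (g₂ * g₃) := by
  refine mul_inv_eq_one.mp (Eq.trans ?_ (hα.1 g₀ g₁ g₂ g₃))
  rw [mul_inv_rev]
  ac_rfl

theorem cocycle_inv_self_right (hα : IsNormalized3Cocycle α) (g₀ g₁ x : G) :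
    α g₁ x⁻¹ x * α g₀ (g₁ * x⁻¹) x * α g₀ g₁ x⁻¹ = α (g₀ * g₁) x⁻¹ x := by
  simpa [(hα.2 _ _).2.2] using hα.cocycle_eq g₀ g₁ x⁻¹ x

theorem cocycle_inv_self_mid (hα : IsNormalized3Cocycle α) (g₀ x g₃ : G) :
    α x⁻¹ x g₃ * α g₀ x⁻¹ x = α (g₀ * x⁻¹) x g₃ * α g₀ x⁻¹ (x * g₃) := by
  simpa [(hα.2 _ _).2.1] using hα.cocycle_eq g₀ x⁻¹ x g₃

theorem cocycle_inv_self_left (hα : IsNormalized3Cocycle α) (x g₂ g₃ : G) :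
    α x g₂ g₃ * α x⁻¹ (x * g₂) g₃ * α x⁻¹ x g₂ = α x⁻¹ x (g₂ * g₃) := by
  simpa [(hα.2 _ _).1] using hα.cocycle_eq x⁻¹ x g₂ g₃

theorem six_term_eq (hα : IsNormalized3Cocycle α) (g h x : G) :
    α g (h * x⁻¹) x * α (h * x⁻¹) x (g * x⁻¹) * α x (g * x⁻¹) (x * h * x⁻¹) *
        (α h x⁻¹ (x * g * x⁻¹) * α x⁻¹ (x * g * x⁻¹) (x * h * x⁻¹) * α g h x⁻¹) =
      α (g * h) x⁻¹ x * α x⁻¹ x (g * h * x⁻¹) := by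
  have right := hα.cocycle_inv_self_right g h x
  have mid := hα.cocycle_inv_self_mid h x (g * x⁻¹)
  have left := hα.cocycle_inv_self_left x (g * x⁻¹) (x * h * x⁻¹)
  have hconj : x * (g * x⁻¹) = x * g * x⁻¹ := (mul_assoc x g x⁻¹).symm
  have hprod : g * x⁻¹ * (x * h * x⁻¹) = g * h * x⁻¹ := by group
  rw [hconj] at mid left
  rw [hprod] at left
  calc _ = (α g (h * x⁻¹) x * α g h x⁻¹) *
          (α (h * x⁻¹) x (g * x⁻¹) * α h x⁻¹ (x * g * x⁻¹)) *
          (α x (g * x⁻¹) (x * h * x⁻¹) * α x⁻¹ (x * g * x⁻¹) (x * h * x⁻¹)) := by ac_rfl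
    _ = (α g (h * x⁻¹) x * α g h x⁻¹) * (α x⁻¹ x (g * x⁻¹) * α h x⁻¹ x) *
          (α x (g * x⁻¹) (x * h * x⁻¹) * α x⁻¹ (x * g * x⁻¹) (x * h * x⁻¹)) := by rw [mid]
    _ = (α h x⁻¹ x * α g (h * x⁻¹) x * α g h x⁻¹) *
          (α x (g * x⁻¹) (x * h * x⁻¹) * α x⁻¹ (x * g * x⁻¹) (x * h * x⁻¹) *
            α x⁻¹ x (g * x⁻¹)) := by ac_rfl
    _ = _ := by rw [right, left]

end IsNormalized3Cocycle

theorem betaTw_of_commute {G : Type*} [Group G] (α : G → G → G → ℂˣ) {a b : G}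
    (hab : Commute a b) (c : G) :
    betaTw α a b c = α a b c * α b c (c⁻¹ * a * c) * (α b a c)⁻¹ := by
  rw [betaTw, show c⁻¹ * b⁻¹ * a * b * c = c⁻¹ * (b⁻¹ * a * b) * c by group,
    hab.symm.inv_mul_cancel]

theorem torus_vertex_phase_eq_beta {G : Type*} [Group G] (α : G → G → G → ℂˣ)
    (hα : IsNormalized3Cocycle α) (g h x : G) (hgh : g * h = h * g) :
    α g (h * x⁻¹) x * (α h (g * x⁻¹) x)⁻¹ * (α (g * x⁻¹) x (h * x⁻¹))⁻¹ *
        α (h * x⁻¹) x (g * x⁻¹) * α x (g * x⁻¹) (x * h * x⁻¹) *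
        (α x (h * x⁻¹) (x * g * x⁻¹))⁻¹ =
      betaTw α g x⁻¹ (x * h * x⁻¹) * (betaTw α g h x⁻¹)⁻¹ := by
  have hcomm : Commute g h := hgh
  have hβ₁ : betaTw α g x⁻¹ (x * h * x⁻¹) = α g x⁻¹ (x * h * x⁻¹) *
      α x⁻¹ (x * h * x⁻¹) (x * g * x⁻¹) * (α x⁻¹ (x * g * x⁻¹) (x * h * x⁻¹))⁻¹ := by
    rw [betaTw, inv_inv, show (x * h * x⁻¹)⁻¹ * x * g * x⁻¹ * (x * h * x⁻¹) =
      x * (h⁻¹ * g * h) * x⁻¹ by group, hcomm.symm.inv_mul_cancel]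
  have hβ₂ := betaTw_of_commute α hcomm x⁻¹
  rw [inv_inv] at hβ₂
  have key := hα.six_term_eq g h x
  have key' := hα.six_term_eq h g x
  rw [← hgh] at key'
  rw [hβ₁, hβ₂]
  refine mul_inv_eq_one.mp (Eq.trans ?_ (mul_inv_eq_one.mpr (key.trans key'.symm)))
  apply Additive.ofMul.injective
  simp only [ofMul_mul, ofMul_inv]
  abel
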